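/- arXiv:1805.11230 — 2 statements merged into one kernel-verified Lean document; each statement's English description precedes it below -/
import Mathlib

section
/- Suppose $x^T F(x) + \frac{\bar p - 1}{2}|G(x)|^2 \le K_2(1+|x|^2)$ for all $x \in \mathbb{R}^d$, where $\bar p > 2$, $K_2 > 0$. Let $\pi_\Delta(x) = (|x| \wedge R)\frac{x}{|x|}$ for some $R \ge 1$ (with $\pi_\Delta(0)=0$), and define $F_\Delta(x) = F(\pi_\Delta(x))$, $G_\Delta(x) = G(\pi_\Delta(x))$. Then $x^T F_\Delta(x) + \frac{\bar p - 1}{2}|G_\Delta(x)|^2 \le 2 K_2 (1 + |x|^2)$ for all $x \in \mathbb{R}^d$. -/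
/-!
Inside the ball of radius `R` the truncation does nothing. Outside it, `x = s • π x` with
`s = ‖x‖ / R ≥ 1`, so the drift term scales by `s` while the nonnegative diffusion term can only
grow when multiplied by `s`; the hypothesis at `π x`, where `‖π x‖ = R`, bounds the whole
expression by `(‖x‖ / R) K₂ (1 + R²)`, and `R ≥ 1` turns this into `2 K₂ ‖x‖²`.
-/

open RealInnerProductSpace

noncomputable section

variable {E M : Type*} [NormedAddCommGroup E] [InnerProductSpace ℝ E] [NormedAddCommGroup M]

/-- Note that `radialRetraction R 0 = 0`, since `0⁻¹ = 0`. -/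
def radialRetraction (R : ℝ) (x : E) : E :=
  min ‖x‖ R • (‖x‖⁻¹ • x)

theorem radialRetraction_of_norm_le {R : ℝ} {x : E} (hx : ‖x‖ ≤ R) :
    radialRetraction R x = x := by
  rcases eq_or_ne x 0 with rfl | hx0
  · simp [radialRetraction]
  · rw [radialRetraction, min_eq_left hx, smul_smul, mul_inv_cancel₀ (norm_ne_zero_iff.2 hx0),
      one_smul]

theorem radialRetraction_of_lt_norm {R : ℝ} {x : E} (hx : R < ‖x‖) :
    radialRetraction R x = (R / ‖x‖) • x := by
  rw [radialRetraction, min_eq_right hx.le, smul_smul, div_eq_mul_inv]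

theorem norm_radialRetraction_of_lt_norm {R : ℝ} (hR : 0 ≤ R) {x : E} (hx : R < ‖x‖) :
    ‖radialRetraction R x‖ = R := by
  have hx0 : ‖x‖ ≠ 0 := (hR.trans_lt hx).ne'
  rw [radialRetraction_of_lt_norm hx, norm_smul, Real.norm_of_nonneg (by positivity),
    div_mul_cancel₀ _ hx0]

theorem smul_radialRetraction_of_lt_norm {R : ℝ} (hR : 0 < R) {x : E} (hx : R < ‖x‖) :
    (‖x‖ / R) • radialRetraction R x = x := by
  have hx0 : ‖x‖ ≠ 0 := (hR.trans hx).ne'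
  rw [radialRetraction_of_lt_norm hx, smul_smul]
  field_simp
  rw [one_smul]

theorem div_mul_one_add_sq_le {R r : ℝ} (hR : 1 ≤ R) (hRr : R ≤ r) :
    r / R * (1 + R ^ 2) ≤ 2 * r ^ 2 := by
  have hR0 : 0 < R := one_pos.trans_le hR
  rw [div_mul_eq_mul_div, div_le_iff₀ hR0]
  nlinarith [mul_le_mul_of_nonneg_left hRr (hR0.le.trans hRr), mul_le_mul_of_nonneg_left hR hR0.le]

theorem inner_radialRetraction_add_le_of_lt_norm (F : E → E) (G : E → M) {c K R : ℝ}
    (hc : 0 ≤ c) (hK : 0 ≤ K) (hR : 1 ≤ R)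
    (hKhas : ∀ y, ⟪y, F y⟫ + c * ‖G y‖ ^ 2 ≤ K * (1 + ‖y‖ ^ 2)) {x : E} (hx : R < ‖x‖) :
    ⟪x, F (radialRetraction R x)⟫ + c * ‖G (radialRetraction R x)‖ ^ 2 ≤ 2 * K * ‖x‖ ^ 2 := by
  set y := radialRetraction R x
  set s := ‖x‖ / R
  have hR0 : 0 < R := one_pos.trans_le hR
  have hs : 1 ≤ s := (one_le_div hR0).2 hx.le
  have hdiff : 0 ≤ c * ‖G y‖ ^ 2 := by positivity
  have hy : ⟪y, F y⟫ + c * ‖G y‖ ^ 2 ≤ K * (1 + R ^ 2) := by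
    simpa only [y, norm_radialRetraction_of_lt_norm hR0.le hx] using hKhas y
  calc ⟪x, F y⟫ + c * ‖G y‖ ^ 2
      = s * ⟪y, F y⟫ + c * ‖G y‖ ^ 2 := by
        rw [← real_inner_smul_left, smul_radialRetraction_of_lt_norm hR0 hx]
    _ ≤ s * (⟪y, F y⟫ + c * ‖G y‖ ^ 2) := by nlinarith
    _ ≤ s * (K * (1 + R ^ 2)) := mul_le_mul_of_nonneg_left hy (zero_le_one.trans hs)
    _ = K * (s * (1 + R ^ 2)) := by ring
    _ ≤ K * (2 * ‖x‖ ^ 2) := mul_le_mul_of_nonneg_left (div_mul_one_add_sq_le hR hx.le) hK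
    _ = 2 * K * ‖x‖ ^ 2 := by ring

theorem inner_radialRetraction_add_le (F : E → E) (G : E → M) {c K R : ℝ}
    (hc : 0 ≤ c) (hK : 0 ≤ K) (hR : 1 ≤ R)
    (hKhas : ∀ y, ⟪y, F y⟫ + c * ‖G y‖ ^ 2 ≤ K * (1 + ‖y‖ ^ 2)) (x : E) :
    ⟪x, F (radialRetraction R x)⟫ + c * ‖G (radialRetraction R x)‖ ^ 2
      ≤ 2 * K * (1 + ‖x‖ ^ 2) := by
  rcases le_or_gt ‖x‖ R with hx | hx
  · rw [radialRetraction_of_norm_le hx]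
    nlinarith [hKhas x, sq_nonneg ‖x‖]
  · nlinarith [inner_radialRetraction_add_le_of_lt_norm F G hc hK hR hKhas hx]

end

theorem stmt_7 {d : ℕ} {M : Type*} [NormedAddCommGroup M]
    (F : EuclideanSpace ℝ (Fin d) → EuclideanSpace ℝ (Fin d))
    (G : EuclideanSpace ℝ (Fin d) → M)
    (pbar K₂ : ℝ) (hpbar : 2 < pbar) (hK₂ : 0 < K₂)
    (hKhas : ∀ x, (inner ℝ x (F x) : ℝ) + (pbar - 1) / 2 * ‖G x‖ ^ 2 ≤ K₂ * (1 + ‖x‖ ^ 2))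
    (R : ℝ) (hR : 1 ≤ R)
    (πΔ : EuclideanSpace ℝ (Fin d) → EuclideanSpace ℝ (Fin d))
    (hπ : ∀ x, πΔ x = (min ‖x‖ R) • (‖x‖⁻¹ • x)) :
    ∀ x, (inner ℝ x (F (πΔ x)) : ℝ) + (pbar - 1) / 2 * ‖G (πΔ x)‖ ^ 2
      ≤ 2 * K₂ * (1 + ‖x‖ ^ 2) := by
  obtain rfl : πΔ = radialRetraction R := funext hπ
  exact inner_radialRetraction_add_le F G (by linarith) hK₂.le hR hKhas
end

section
/- Suppose $2x^T f(x) + |g(x)|^2 + \lambda(2x^T h(x) + |h(x)|^2) \le \bar K(1+|x|^2)$ for all $x \in \mathbb{R}^d$, where $\lambda, \bar K > 0$. Let $R \ge 1$, define $\pi(x) = (|x| \wedge R)\frac{x}{|x|}$ (with $\pi(0)=0$) and $f_\Delta = f \circ \pi$, $g_\Delta = g \circ \pi$, $h_\Delta = h \circ \pi$. Then $2x^T f_\Delta(x) + |g_\Delta(x)|^2 + \lambda(2x^T h_\Delta(x) + |h_\Delta(x)|^2) \le 2\bar K(1+|x|^2)$ for all $x \in \mathbb{R}^d$. -/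
/-!
Inside the ball of radius `R` the truncation is the identity, so the original bound holds there.
Outside it, `x = a • π x` with `a = ‖x‖ / R ≥ 1` and `‖π x‖ = R`. The inner-product terms scale
by `a` while the squared-norm terms do not, so the truncated quantity is at most `a` times the
original one at `π x`, i.e. at most `a K̄ (1 + R²)`, and `a (1 + R²) ≤ 2 (1 + a² R²)`.
-/

open RealInnerProductSpace

section Truncation

variable {E : Type*} [NormedAddCommGroup E] [NormedSpace ℝ E]

theorem min_norm_smul_inv_norm_smul_of_norm_le {x : E} {R : ℝ} (hx : ‖x‖ ≤ R) :
    min ‖x‖ R • ‖x‖⁻¹ • x = x := by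
  rw [min_eq_left hx, smul_smul]
  rcases eq_or_ne x 0 with rfl | hx0
  · simp
  · rw [mul_inv_cancel₀ (norm_ne_zero_iff.mpr hx0), one_smul]

theorem norm_min_norm_smul_inv_norm_smul_of_lt_norm {x : E} {R : ℝ} (hR : 0 < R)
    (hx : R < ‖x‖) : ‖min ‖x‖ R • ‖x‖⁻¹ • x‖ = R := by
  rw [min_eq_right hx.le, norm_smul, norm_smul, norm_inv, norm_norm,
    inv_mul_cancel₀ (hR.trans hx).ne', mul_one, Real.norm_of_nonneg hR.le]

theorem div_smul_min_norm_smul_inv_norm_smul_of_lt_norm {x : E} {R : ℝ} (hR : 0 < R)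
    (hx : R < ‖x‖) : (‖x‖ / R) • min ‖x‖ R • ‖x‖⁻¹ • x = x := by
  rw [min_eq_right hx.le, smul_smul, smul_smul, div_mul_cancel₀ _ hR.ne',
    mul_inv_cancel₀ (hR.trans hx).ne', one_smul]

end Truncation

section Khasminskii

variable {E M : Type*} [NormedAddCommGroup E] [InnerProductSpace ℝ E] [NormedAddCommGroup M]

/-- The left-hand side of the jump-adapted Khasminskii condition, with the state `x` in the
inner products and the coefficients evaluated at `y`. -/
def khasminskiiForm (f h : E → E) (g : E → M) (lam : ℝ) (x y : E) : ℝ :=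
  2 * ⟪x, f y⟫ + ‖g y‖ ^ 2 + lam * (2 * ⟪x, h y⟫ + ‖h y‖ ^ 2)

theorem khasminskiiForm_smul_le (f h : E → E) (g : E → M) {lam a : ℝ} (hlam : 0 ≤ lam)
    (ha : 1 ≤ a) (y : E) :
    khasminskiiForm f h g lam (a • y) y ≤ a * khasminskiiForm f h g lam y y := by
  have hg : (1 - a) * ‖g y‖ ^ 2 ≤ 0 :=
    mul_nonpos_of_nonpos_of_nonneg (by linarith) (sq_nonneg _)
  have hh : (1 - a) * (lam * ‖h y‖ ^ 2) ≤ 0 :=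
    mul_nonpos_of_nonpos_of_nonneg (by linarith) (by positivity)
  simp only [khasminskiiForm, real_inner_smul_left]
  linarith

end Khasminskii

theorem mul_one_add_sq_le_two_mul_one_add_mul_sq {a R : ℝ} (ha : 1 ≤ a) (hR : 1 ≤ R) :
    a * (1 + R ^ 2) ≤ 2 * (1 + (a * R) ^ 2) := by
  have haR : 1 ≤ a * R := one_le_mul_of_one_le_of_one_le ha hR
  have h₁ : a ≤ (a * R) ^ 2 := by nlinarith
  have h₂ : a * R ^ 2 ≤ (a * R) ^ 2 := by nlinarith
  linarith

theorem stmt_8 {d : ℕ} {M : Type*} [NormedAddCommGroup M]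
    (f h : EuclideanSpace ℝ (Fin d) → EuclideanSpace ℝ (Fin d))
    (g : EuclideanSpace ℝ (Fin d) → M)
    (lam Kbar : ℝ) (hlam : 0 < lam) (hKbar : 0 < Kbar)
    (hKhas : ∀ x, 2 * (inner ℝ x (f x) : ℝ) + ‖g x‖ ^ 2
      + lam * (2 * (inner ℝ x (h x) : ℝ) + ‖h x‖ ^ 2) ≤ Kbar * (1 + ‖x‖ ^ 2))
    (R : ℝ) (hR : 1 ≤ R)
    (π : EuclideanSpace ℝ (Fin d) → EuclideanSpace ℝ (Fin d))
    (hπ : ∀ x, π x = (min ‖x‖ R) • (‖x‖⁻¹ • x)) :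
    ∀ x, 2 * (inner ℝ x (f (π x)) : ℝ) + ‖g (π x)‖ ^ 2
      + lam * (2 * (inner ℝ x (h (π x)) : ℝ) + ‖h (π x)‖ ^ 2)
      ≤ 2 * Kbar * (1 + ‖x‖ ^ 2) := by
  intro x
  change khasminskiiForm f h g lam x (π x) ≤ _
  have hK (y) : khasminskiiForm f h g lam y y ≤ Kbar * (1 + ‖y‖ ^ 2) := hKhas y
  rcases le_or_gt ‖x‖ R with hx | hx
  · rw [hπ, min_norm_smul_inv_norm_smul_of_norm_le hx]
    nlinarith [hK x, sq_nonneg ‖x‖]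
  · have hR0 : 0 < R := zero_lt_one.trans_le hR
    have ha : 1 ≤ ‖x‖ / R := (one_le_div hR0).mpr hx.le
    have hnorm : ‖π x‖ = R := by rw [hπ]; exact norm_min_norm_smul_inv_norm_smul_of_lt_norm hR0 hx
    have hxπ : (‖x‖ / R) • π x = x := by
      rw [hπ]; exact div_smul_min_norm_smul_inv_norm_smul_of_lt_norm hR0 hx
    have hKπ : khasminskiiForm f h g lam (π x) (π x) ≤ Kbar * (1 + R ^ 2) := hnorm ▸ hK (π x)
    calc khasminskiiForm f h g lam x (π x)
        = khasminskiiForm f h g lam ((‖x‖ / R) • π x) (π x) := by rw [hxπ]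
      _ ≤ ‖x‖ / R * khasminskiiForm f h g lam (π x) (π x) :=
          khasminskiiForm_smul_le f h g hlam.le ha (π x)
      _ ≤ ‖x‖ / R * (Kbar * (1 + R ^ 2)) := mul_le_mul_of_nonneg_left hKπ (by linarith)
      _ = Kbar * (‖x‖ / R * (1 + R ^ 2)) := by ring
      _ ≤ Kbar * (2 * (1 + (‖x‖ / R * R) ^ 2)) :=
          mul_le_mul_of_nonneg_left (mul_one_add_sq_le_two_mul_one_add_mul_sq ha hR) hKbar.le
      _ = 2 * Kbar * (1 + ‖x‖ ^ 2) := by rw [div_mul_cancel₀ _ hR0.ne']; ring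
end
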